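/- arXiv:1904.00808 — 2 statements merged into one kernel-verified Lean document; each statement's English description precedes it below -/
import Mathlib

section
/- Let X be a metric space and ℙ a finite Borel measure on Γ(X). Then for every Borel set B ⊂ X the map γ ↦ γ_*𝓛¹(B) is a Borel function on Γ(X), and the set function ν(ℙ) defined by ν(ℙ)(B) = ∫_{Γ(X)} γ_*𝓛¹(B) dℙ(γ) for Borel B ⊂ X is a Borel measure on X. -/
open MeasureTheory Metric Set Filter Topology ENNReal NNReal
open scoped RealInnerProductSpace

noncomputable section

namespace BKO

/-- `ℝⁿ` with the Euclidean metric. -/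
abbrev E (n : ℕ) : Type := EuclideanSpace ℝ (Fin n)

variable {X : Type*} [MetricSpace X]

/-- A set `G ⊆ ℝ × X` is the graph of a curve fragment if all first coordinates lie
in `[0,1]` and it is the graph of a `2`-biLipschitz function defined on a subset of `[0,1]`. -/
def IsFragmentGraph (X : Type*) [MetricSpace X] (G : Set (ℝ × X)) : Prop :=
  (∀ p ∈ G, p.1 ∈ Set.Icc (0:ℝ) 1) ∧
  ∀ p ∈ G, ∀ q ∈ G, |p.1 - q.1| ≤ 2 * dist p.2 q.2 ∧ dist p.2 q.2 ≤ 2 * |p.1 - q.1|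

/-- The space `Γ(X)` of curve fragments, identified with their graphs (nonempty compact
subsets of `[0,1] × X`), with the Hausdorff metric `d_Γ(γ₁,γ₂) = d_H(gr γ₁, gr γ₂)`. -/
def Fragment (X : Type*) [MetricSpace X] : Type _ :=
  {G : TopologicalSpace.NonemptyCompacts (ℝ × X) // IsFragmentGraph X (G : Set (ℝ × X))}

instance : MetricSpace (Fragment X) :=
  inferInstanceAs (MetricSpace {G : TopologicalSpace.NonemptyCompacts (ℝ × X) // _})

instance : MeasurableSpace (Fragment X) := borel _
instance : BorelSpace (Fragment X) := ⟨rfl⟩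

namespace Fragment

/-- The graph of a curve fragment. -/
def graph (γ : Fragment X) : Set (ℝ × X) := (γ.1 : Set (ℝ × X))

/-- The (compact) domain of a curve fragment. -/
def dom (γ : Fragment X) : Set ℝ := Prod.fst '' γ.graph

/-- The image of a curve fragment. -/
def im (γ : Fragment X) : Set X := Prod.snd '' γ.graph

/-- The function `dom γ → X` determined by the graph (junk value off the domain). -/
def fn (γ : Fragment X) (t : ℝ) : X :=
  @dite X (∃ x, (t, x) ∈ γ.graph) (Classical.dec _)
    (fun h => h.choose) (fun _ => γ.1.nonempty.choose.2)

/-- `γ_* 𝓛¹`: the pushforward under `γ` of Lebesgue measure restricted to `dom γ`. -/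
def measure [MeasurableSpace X] (γ : Fragment X) : Measure X :=
  (volume.restrict γ.dom).map γ.fn

end Fragment

/-- The measure `ν(ℙ)`, `ν(ℙ)(B) = ∫ γ_*𝓛¹(B) dℙ(γ)`. -/
def nu [MeasurableSpace X] (ℙ : Measure (Fragment X)) : Measure X :=
  ℙ.bind Fragment.measure

/-- The cone `C(w,θ) = {v : |⟨v,w⟩| ≥ θ‖v‖}`. -/
def cone {n : ℕ} (w : E n) (θ : ℝ) : Set (E n) := {v | θ * ‖v‖ ≤ |⟪v, w⟫|}

/-- A cone in `ℝⁿ` is a set of the form `C(w,θ)` with `w ∈ Sⁿ⁻¹`, `θ ∈ (0,1)`. -/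
def IsCone {n : ℕ} (C : Set (E n)) : Prop :=
  ∃ (w : E n) (θ : ℝ), ‖w‖ = 1 ∧ θ ∈ Set.Ioo (0:ℝ) 1 ∧ C = cone w θ

/-- `γ` is a `C`-curve with respect to `φ`. -/
def IsConeCurve {n : ℕ} (φ : X → E n) (C : Set (E n)) (γ : Fragment X) : Prop :=
  ∃ δ > (0:ℝ), ∀ p ∈ γ.graph, ∀ q ∈ γ.graph,
    φ p.2 - φ q.2 ∈ C \ Metric.ball 0 (δ * |p.1 - q.1|)

/-- `ℙ` is a `C`-Alberti representation of `μ` with respect to `φ`. -/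
def IsConeAlbertiRep [MeasurableSpace X] {n : ℕ} (μ : Measure X) (φ : X → E n)
    (C : Set (E n)) (ℙ : Measure (Fragment X)) : Prop :=
  IsProbabilityMeasure ℙ ∧ μ ≪ nu ℙ ∧ ∀ᵐ γ ∂ℙ, IsConeCurve φ C γ

/-- `S` is `C`-null with respect to `φ`: every `C`-curve meets `S` in `𝓗¹`-measure zero. -/
def ConeNull [MeasurableSpace X] [BorelSpace X] {n : ℕ} (φ : X → E n) (C : Set (E n))
    (S : Set X) : Prop :=
  ∀ γ : Fragment X, IsConeCurve φ C γ → μH[1] (γ.im ∩ S) = 0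

/-- Cones `C₁,…,C_m` are independent. -/
def IndepCones {n m : ℕ} (C : Fin m → Set (E n)) : Prop :=
  ∀ v : Fin m → E n, (∀ i, v i ∈ C i ∧ v i ≠ 0) → LinearIndependent ℝ v

/-- `μ` has `n` independent Alberti representations. -/
def HasIndepAlberti [MeasurableSpace X] (μ : Measure X) (n : ℕ) : Prop :=
  ∃ φ : X → E n, (∃ K, LipschitzWith K φ) ∧ ∃ C : Fin n → Set (E n),
    (∀ i, IsCone (C i)) ∧ IndepCones C ∧ ∀ i, ∃ ℙ, IsConeAlbertiRep μ φ (C i) ℙ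

/-- The collection `𝒮(φ)` of singular sets. -/
def MemScal [MeasurableSpace X] [BorelSpace X] {n : ℕ} (φ : X → E n) (S : Set X) : Prop :=
  MeasurableSet S ∧ ∀ θ ∈ Set.Ioo (0:ℝ) 1, ∃ (m : ℕ) (S' : Fin m → Set X) (w : Fin m → E n),
    S = (⋃ i, S' i) ∧ ∀ i, MeasurableSet (S' i) ∧ ‖w i‖ = 1 ∧ ConeNull φ (cone (w i) θ) (S' i)

/-- `Lip(f,x) = limsup_{r→0⁺} sup_{d(x,y)≤r} |f(y)-f(x)|/r`. -/
def lipAt (f : X → ℝ) (x : X) : ℝ :=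
  Filter.limsup (fun r : ℝ => sSup ((fun y => |f y - f x| / r) '' Metric.closedBall x r))
    (𝓝[>] (0:ℝ))

/-- `ind φ = {x : Lip(D⬝φ, x) > 0 for all D ∈ Sⁿ⁻¹}`. -/
def indSet {n : ℕ} (φ : X → E n) : Set X :=
  {x | ∀ D : E n, ‖D‖ = 1 → 0 < lipAt (fun y => ⟪φ y, D⟫) x}

/-- `f` is differentiable with respect to `φ` at `x₀`, with a unique derivative. -/
def DiffWrtAt {n : ℕ} (φ : X → E n) (f : X → ℝ) (x₀ : X) : Prop :=
  ∃! L : E n →ₗ[ℝ] ℝ,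
    Filter.Tendsto (fun x => |f x - f x₀ - L (φ x - φ x₀)| / dist x x₀) (𝓝[≠] x₀) (𝓝 0)

/-- `(X,d,μ)` is a Lipschitz differentiability space, with all chart dimensions
satisfying the predicate `P`. -/
def IsLipDiffSpaceWith [MeasurableSpace X] (μ : Measure X) (P : ℕ → Prop) : Prop :=
  ∃ (N : ℕ → ℕ) (U : ℕ → Set X) (φ : (i : ℕ) → X → E (N i)),
    (∀ i, P (N i)) ∧ (∀ i, MeasurableSet (U i)) ∧ (⋃ i, U i) = Set.univ ∧
    (∀ i, ∃ K, LipschitzWith K (φ i)) ∧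
    ∀ f : X → ℝ, (∃ K, LipschitzWith K f) →
      ∀ i, ∀ᵐ x ∂μ, x ∈ U i → DiffWrtAt (φ i) f x

/-- `ρ` is an upper gradient of `f`. -/
def IsUpperGradient (f ρ : X → ℝ) : Prop :=
  ∀ γ : ℝ → X, LipschitzOnWith 1 γ (Set.Icc 0 1) →
    |f (γ 1) - f (γ 0)| ≤ ∫ t in Set.Icc (0:ℝ) 1, ρ (γ t)

/-- `ρ` is a `*`-upper gradient of `f`. -/
def IsStarUpperGradient (f ρ : X → ℝ) : Prop :=
  ∀ γ : Fragment X, LipschitzOnWith 1 γ.fn γ.dom →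
    ∀ᵐ t ∂(volume.restrict γ.dom),
      ∀ v : ℝ, HasDerivWithinAt (f ∘ γ.fn) v γ.dom t → |v| ≤ ρ (γ.fn t)

/-- The dyadic cube of side length `2^{-m}` in `[0,1)ⁿ` indexed by `k`. -/
def dyadicCube (n m : ℕ) (k : Fin n → Fin (2 ^ m)) : Set (E n) :=
  {x | ∀ i, (k i : ℝ) / 2 ^ m ≤ x i ∧ x i < ((k i : ℝ) + 1) / 2 ^ m}

/-! For closed `B`, `γ_*𝓛¹(B)` is the Lebesgue measure of the compact set of times at which the
graph of `γ` lies over `B`. A graph Hausdorff-close to `gr γ` lies over `B` only at times close to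
these, so `γ ↦ γ_*𝓛¹(B)` is upper semicontinuous. Closed sets form a π-system generating the Borel
sets and every `γ_*𝓛¹` is finite, so by Dynkin's theorem `γ ↦ γ_*𝓛¹` is a measurable map into
measures, and `ν(ℙ)` is the bind of `ℙ` with it. -/

theorem _root_.IsCompact.exists_thickening_inter_subset_thickening {α : Type*}
    [PseudoEMetricSpace α] {K C : Set α} (hK : IsCompact K) (hC : IsClosed C) {ε : ℝ}
    (hε : 0 < ε) : ∃ δ > 0, thickening δ K ∩ C ⊆ thickening ε (K ∩ C) := by
  have hKU : K ⊆ thickening ε (K ∩ C) ∪ Cᶜ := fun k hk => by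
    by_cases hkC : k ∈ C
    · exact .inl (self_subset_thickening hε _ ⟨hk, hkC⟩)
    · exact .inr hkC
  obtain ⟨δ, hδ, hsub⟩ :=
    hK.exists_thickening_subset_open (isOpen_thickening.union hC.isOpen_compl) hKU
  exact ⟨δ, hδ, fun p ⟨hpK, hpC⟩ => (hsub hpK).resolve_right (not_not_intro hpC)⟩

theorem _root_.Metric.image_fst_thickening_subset {α β : Type*} [PseudoMetricSpace α]
    [PseudoMetricSpace β] (r : ℝ) (s : Set (α × β)) :
    Prod.fst '' thickening r s ⊆ thickening r (Prod.fst '' s) := by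
  rintro _ ⟨p, hp, rfl⟩
  obtain ⟨q, hq, hpq⟩ := mem_thickening_iff.mp hp
  rw [Prod.dist_eq] at hpq
  exact mem_thickening_iff.mpr ⟨q.1, mem_image_of_mem _ hq, (le_max_left _ _).trans_lt hpq⟩

theorem _root_.TopologicalSpace.NonemptyCompacts.subset_thickening_of_dist_lt {α : Type*}
    [MetricSpace α] {K L : TopologicalSpace.NonemptyCompacts α} {δ : ℝ} (h : dist K L < δ) :
    (K : Set α) ⊆ thickening δ L := fun x hx => by
  rw [NonemptyCompacts.dist_eq] at h
  obtain ⟨y, hy, hxy⟩ := exists_dist_lt_of_hausdorffDist_lt hx h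
    (hausdorffEDist_ne_top_of_nonempty_of_bounded K.nonempty L.nonempty
      K.isCompact.isBounded L.isCompact.isBounded)
  exact mem_thickening_iff.mpr ⟨y, hy, hxy⟩

theorem _root_.TopologicalSpace.NonemptyCompacts.upperSemicontinuous_measure_image_fst
    {α β : Type*} [MetricSpace α] [ProperSpace α] [MeasurableSpace α] [OpensMeasurableSpace α]
    [MetricSpace β] (μ : Measure α) [IsFiniteMeasureOnCompacts μ] {B : Set β}
    (hB : IsClosed B) :
    UpperSemicontinuous fun K : TopologicalSpace.NonemptyCompacts (α × β) =>
      μ (Prod.fst '' (K ∩ Prod.snd ⁻¹' B)) := by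
  intro K c hc
  have hC : IsClosed (Prod.snd ⁻¹' B : Set (α × β)) := hB.preimage continuous_snd
  have hcpt : IsCompact (Prod.fst '' ((K : Set (α × β)) ∩ Prod.snd ⁻¹' B)) :=
    (K.isCompact.inter_right hC).image continuous_fst
  have hlim := tendsto_measure_thickening_of_isClosed (μ := μ)
    ⟨1, one_pos, hcpt.isBounded.thickening.measure_lt_top.ne⟩ hcpt.isClosed
  obtain ⟨r, hr, hrpos⟩ := ((hlim.eventually (gt_mem_nhds hc)).and self_mem_nhdsWithin).exists
  obtain ⟨δ, hδ, hsub⟩ := K.isCompact.exists_thickening_inter_subset_thickening hC hrpos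
  filter_upwards [ball_mem_nhds K hδ] with L hL
  refine lt_of_le_of_lt (measure_mono ?_) hr
  calc Prod.fst '' ((L : Set (α × β)) ∩ Prod.snd ⁻¹' B)
      ⊆ Prod.fst '' thickening r ((K : Set (α × β)) ∩ Prod.snd ⁻¹' B) :=
        image_mono ((inter_subset_inter_left _ (L.subset_thickening_of_dist_lt hL)).trans hsub)
    _ ⊆ thickening r (Prod.fst '' ((K : Set (α × β)) ∩ Prod.snd ⁻¹' B)) :=
        image_fst_thickening_subset r _

namespace Fragment

theorem eq_of_mem_graph {γ : Fragment X} {t : ℝ} {x y : X} (hx : (t, x) ∈ γ.graph)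
    (hy : (t, y) ∈ γ.graph) : x = y := by
  have h := (γ.2.2 (t, x) hx (t, y) hy).2
  rw [sub_self, abs_zero, mul_zero] at h
  exact dist_le_zero.mp h

theorem mem_graph_fn {γ : Fragment X} {t : ℝ} (ht : t ∈ γ.dom) : (t, γ.fn t) ∈ γ.graph := by
  obtain ⟨p, hp, rfl⟩ := ht
  have hex : ∃ x, (p.1, x) ∈ γ.graph := ⟨p.2, hp⟩
  rw [fn, dif_pos hex]
  exact hex.choose_spec

theorem isCompact_dom (γ : Fragment X) : IsCompact γ.dom :=
  γ.1.isCompact.image continuous_fst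

theorem lipschitzOnWith_fn (γ : Fragment X) : LipschitzOnWith 2 γ.fn γ.dom :=
  .of_dist_le_mul fun s hs t ht => by
    simpa [Real.dist_eq] using (γ.2.2 _ (mem_graph_fn hs) _ (mem_graph_fn ht)).2

theorem fn_preimage_inter_dom (γ : Fragment X) (B : Set X) :
    γ.fn ⁻¹' B ∩ γ.dom = Prod.fst '' (γ.graph ∩ Prod.snd ⁻¹' B) := by
  ext t
  constructor
  · rintro ⟨hB, hdom⟩
    exact ⟨(t, γ.fn t), ⟨mem_graph_fn hdom, hB⟩, rfl⟩
  · rintro ⟨⟨s, x⟩, ⟨hg, hx⟩, rfl⟩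
    have hs : s ∈ γ.dom := ⟨(s, x), hg, rfl⟩
    rw [← eq_of_mem_graph (mem_graph_fn hs) hg] at hx
    exact ⟨hx, hs⟩

theorem measure_apply [MeasurableSpace X] [BorelSpace X] (γ : Fragment X)
    {B : Set X} (hB : MeasurableSet B) :
    γ.measure B = volume (Prod.fst '' (γ.graph ∩ Prod.snd ⁻¹' B)) := by
  have hdom := γ.isCompact_dom.isClosed.measurableSet
  rw [Fragment.measure,
    Measure.map_apply_of_aemeasurable (γ.lipschitzOnWith_fn.continuousOn.aemeasurable hdom) hB,
    Measure.restrict_apply' hdom, fn_preimage_inter_dom]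

instance isFiniteMeasure_measure [MeasurableSpace X] (γ : Fragment X) :
    IsFiniteMeasure γ.measure :=
  have : Fact (volume γ.dom < ∞) := ⟨γ.isCompact_dom.measure_lt_top⟩
  inferInstanceAs (IsFiniteMeasure ((volume.restrict γ.dom).map γ.fn))

theorem upperSemicontinuous_measure_apply [MeasurableSpace X] [BorelSpace X]
    {B : Set X} (hB : IsClosed B) : UpperSemicontinuous fun γ : Fragment X => γ.measure B := by
  simp only [measure_apply _ hB.measurableSet]
  exact (TopologicalSpace.NonemptyCompacts.upperSemicontinuous_measure_image_fst volume hB).comp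
    continuous_subtype_val

theorem measurable_measure [MeasurableSpace X] [BorelSpace X] :
    Measurable (Fragment.measure : Fragment X → Measure X) :=
  .measure_of_isPiSystem (BorelSpace.measurable_eq.trans borel_eq_generateFrom_isClosed)
    isPiSystem_isClosed (fun _ hB => (upperSemicontinuous_measure_apply hB).measurable)
    (upperSemicontinuous_measure_apply isClosed_univ).measurable

end Fragment

variable {X : Type*} [MetricSpace X] [MeasurableSpace X] [BorelSpace X]

theorem measurable_pushforward_and_nu_exists_general (ℙ : Measure (Fragment X)) :
    (∀ B : Set X, MeasurableSet B → Measurable (fun γ : Fragment X => γ.measure B)) ∧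
    ∃ ν : Measure X, ∀ B : Set X, MeasurableSet B → ν B = ∫⁻ γ, γ.measure B ∂ℙ :=
  ⟨fun _ hB => (Measure.measurable_coe hB).comp Fragment.measurable_measure,
    nu ℙ, fun _ hB => Measure.bind_apply hB Fragment.measurable_measure.aemeasurable⟩

/-- For a finite Borel measure `ℙ` on `Γ(X)`, the map `γ ↦ γ_*𝓛¹(B)` is
Borel for every Borel `B ⊆ X`, and `B ↦ ∫ γ_*𝓛¹(B) dℙ(γ)` defines a Borel measure. -/
theorem measurable_pushforward_and_nu_exists (ℙ : Measure (Fragment X))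
    [IsFiniteMeasure ℙ] :
    (∀ B : Set X, MeasurableSet B → Measurable (fun γ : Fragment X => γ.measure B)) ∧
    ∃ ν : Measure X, ∀ B : Set X, MeasurableSet B → ν B = ∫⁻ γ, γ.measure B ∂ℙ :=
  measurable_pushforward_and_nu_exists_general ℙ

end BKO
end
end

section
/- Let (X,d,μ) be a metric measure space and suppose there exists C ≥ 1 such that for every Lipschitz f : X → ℝ and every *-upper gradient ρ of f, one has Lip(f,x) ≤ C·ρ(x) for μ-almost every x ∈ X. Then for every n ∈ ℕ, every Lipschitz φ : X → ℝⁿ and every S ∈ 𝒮(φ), one has μ(S ∩ ind φ) = 0. -/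
/-!
Let `K` be a Lipschitz constant of `φ`. If `S` is `C(w,θ)`-null, the function equal to `K θ` on
`S` and to `K` off `S` is a `*`-upper gradient of `⟪φ, w⟫`: at a point of `γ⁻¹ S` where
`⟪φ ∘ γ, w⟫` had slope larger than `K θ`, the restriction of `γ` to a short piece of its domain
would be a `C(w,θ)`-curve, so such points form a Lebesgue-null set. The
hypothesis then bounds `Lip(⟪φ, wᵢ⟫, ·)` by `C K θ` almost everywhere on each piece `Sᵢ` of a
decomposition of `S ∈ 𝒮(φ)`, so letting `θ → 0`, almost every `x ∈ S` admits directions `w` with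
`Lip(⟪φ, w⟫, x)` arbitrarily small. As `w ↦ Lip(⟪φ, w⟫, x)` is `K`-Lipschitz and the unit sphere
is compact, this cannot happen on `ind φ`.
-/

open MeasureTheory Metric Set Filter Topology ENNReal NNReal
open scoped RealInnerProductSpace

noncomputable section

namespace BKO

variable {X : Type*} [MetricSpace X]

namespace Fragment

lemma fn_mem_graph (γ : Fragment X) {t : ℝ} (ht : t ∈ γ.dom) : (t, γ.fn t) ∈ γ.graph := by
  obtain ⟨p, hp, rfl⟩ := ht
  have h : ∃ x, (p.1, x) ∈ γ.graph := ⟨p.2, hp⟩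
  show (p.1, @dite X _ (Classical.dec _) _ _) ∈ γ.graph
  rw [dif_pos h]
  exact h.choose_spec

lemma isClosed_dom (γ : Fragment X) : IsClosed γ.dom :=
  (γ.1.isCompact.image continuous_fst).isClosed

lemma abs_sub_le_two_mul_dist (γ : Fragment X) {s t : ℝ} (hs : s ∈ γ.dom) (ht : t ∈ γ.dom) :
    |s - t| ≤ 2 * dist (γ.fn s) (γ.fn t) :=
  (γ.2.2 _ (γ.fn_mem_graph hs) _ (γ.fn_mem_graph ht)).1

lemma continuousOn_fn (γ : Fragment X) : ContinuousOn γ.fn γ.dom := by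
  refine (LipschitzOnWith.of_dist_le_mul (K := 2) fun s hs t ht => ?_).continuousOn
  simpa [Real.dist_eq] using (γ.2.2 _ (γ.fn_mem_graph hs) _ (γ.fn_mem_graph ht)).2

def restrict (γ : Fragment X) (P : Set ℝ) (hP : IsCompact P) (hne : P.Nonempty)
    (hPγ : P ⊆ γ.dom) : Fragment X :=
  ⟨⟨⟨(fun t => (t, γ.fn t)) '' P,
      hP.image_of_continuousOn (continuousOn_id.prodMk (γ.continuousOn_fn.mono hPγ))⟩,
      hne.image _⟩,
    have hsub : (fun t => (t, γ.fn t)) '' P ⊆ γ.graph := by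
      rintro _ ⟨t, ht, rfl⟩
      exact γ.fn_mem_graph (hPγ ht)
    ⟨fun p hp => γ.2.1 p (hsub hp), fun p hp q hq => γ.2.2 p (hsub hp) q (hsub hq)⟩⟩

lemma im_restrict (γ : Fragment X) {P : Set ℝ} (hP : IsCompact P) (hne : P.Nonempty)
    (hPγ : P ⊆ γ.dom) : (γ.restrict P hP hne hPγ).im = γ.fn '' P :=
  image_image _ _ _

lemma volume_eq_zero_of_hausdorffMeasure_image [MeasurableSpace X] [BorelSpace X]
    (γ : Fragment X) {A : Set ℝ} (hA : A ⊆ γ.dom) (h : μH[1] (γ.fn '' A) = 0) :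
    volume A = 0 := by
  have hanti : AntilipschitzWith 2 fun s : γ.dom => γ.fn s :=
    AntilipschitzWith.of_le_mul_dist fun s t => by
      simpa [Subtype.dist_eq, Real.dist_eq] using γ.abs_sub_le_two_mul_dist s.2 t.2
  obtain ⟨A, rfl⟩ : ∃ A' : Set γ.dom, Subtype.val '' A' = A :=
    ⟨Subtype.val ⁻¹' A, by simpa using hA⟩
  rw [← hausdorffMeasure_real, isometry_subtype_coe.hausdorffMeasure_image (Or.inl zero_le_one)]
  refine le_antisymm ((hanti.le_hausdorffMeasure_image zero_le_one A).trans ?_) zero_le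
  rw [image_image] at h
  rw [h, mul_zero]

end Fragment

lemma countable_setOf_isolated_within {α : Type*} [LinearOrder α] [TopologicalSpace α]
    [OrderTopology α] [SecondCountableTopology α] (s : Set α) :
    {t ∈ s | 𝓝[s \ {t}] t = ⊥}.Countable :=
  countable_setOfPred_isolated_right_within.mono fun t ⟨ht, hbot⟩ => by
    have hIoi : s ∩ Ioi t ⊆ s \ {t} := fun _ hu => ⟨hu.1, ne_of_gt hu.2⟩
    exact ⟨ht, le_bot_iff.1 (hbot ▸ nhdsWithin_mono t hIoi)⟩

lemma _root_.LipschitzWith.inner_const {F : Type*} [NormedAddCommGroup F] [InnerProductSpace ℝ F]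
    {φ : X → F} {K : ℝ≥0} (hφ : LipschitzWith K φ) (u : F) :
    LipschitzWith (K * ‖u‖₊) (fun y => ⟪φ y, u⟫) := by
  refine LipschitzWith.of_dist_le_mul fun y z => ?_
  rw [Real.dist_eq, ← inner_sub_left]
  calc |⟪φ y - φ z, u⟫| ≤ ‖φ y - φ z‖ * ‖u‖ := abs_real_inner_le_norm _ _
    _ ≤ K * dist y z * ‖u‖ := by
        rw [← dist_eq_norm]
        gcongr
        exact hφ.dist_le_mul y z
    _ = _ := by push_cast; ring

lemma mem_cone_diff_ball {n : ℕ} {v w : E n} (hw : ‖w‖ = 1) {θ a : ℝ} (hθ : θ * ‖v‖ ≤ a)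
    (ha : a ≤ |⟪v, w⟫|) : v ∈ cone w θ \ ball 0 a := by
  have hvw : |⟪v, w⟫| ≤ ‖v‖ := by simpa [hw] using abs_real_inner_le_norm v w
  exact ⟨hθ.trans ha, fun hv => (mem_ball_zero_iff.1 hv).not_ge (ha.trans hvw)⟩

def expandingSet (g : ℝ → ℝ) (s : Set ℝ) (c r : ℝ) : Set ℝ :=
  {t ∈ s | ∀ u ∈ s, |u - t| < r → c * |u - t| ≤ |g u - g t|}

section ExpandingSet

variable {g : ℝ → ℝ} {s : Set ℝ} {c r : ℝ}

lemma expandingSet_anti {r' : ℝ} (hr : r' ≤ r) : expandingSet g s c r ⊆ expandingSet g s c r' :=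
  fun _ ⟨ht, hexp⟩ => ⟨ht, fun u hu hut => hexp u hu (hut.trans_le hr)⟩

lemma isClosed_expandingSet (hs : IsClosed s) (hg : ContinuousOn g s) :
    IsClosed (expandingSet g s c r) := by
  refine closure_subset_iff_isClosed.1 fun t ht => ?_
  have hts : t ∈ s := hs.closure_subset (closure_mono (fun _ h => h.1) ht)
  refine ⟨hts, fun u hu hut => ?_⟩
  have hnear : IsOpen {t' | |u - t'| < r} := isOpen_lt (by fun_prop) continuous_const
  refine ContinuousWithinAt.closure_le (hnear.inter_closure ⟨hut, ht⟩)
    (by fun_prop : Continuous fun t' => c * |u - t'|).continuousWithinAt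
    ((continuousWithinAt_const.sub (hg t hts)).abs.mono fun _ h => h.2.1)
    fun t' ht' => ht'.2.2 u hu ht'.1

lemma _root_.HasDerivWithinAt.exists_mem_expandingSet {t v : ℝ} (hv : HasDerivWithinAt g v s t)
    (ht : t ∈ s) (hc : c < |v|) : ∃ r > 0, t ∈ expandingSet g s c r := by
  have hsmall := (hasDerivWithinAt_iff_isLittleO.1 hv).def (sub_pos.2 hc)
  obtain ⟨r, hr, hball⟩ := Metric.eventually_nhds_iff.1 (eventually_nhdsWithin_iff.1 hsmall)
  refine ⟨r, hr, ht, fun u hu hut => ?_⟩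
  have hu := hball (by rwa [Real.dist_eq]) hu
  simp only [Real.norm_eq_abs, smul_eq_mul] at hu
  have htri := abs_sub_abs_le_abs_sub ((u - t) * v) (g u - g t)
  rw [abs_mul, abs_sub_comm ((u - t) * v)] at htri
  nlinarith [abs_nonneg (u - t)]

lemma _root_.HasDerivWithinAt.abs_le_of_lipschitzOnWith {t v : ℝ} {K : ℝ≥0}
    (hv : HasDerivWithinAt g v s t) (hg : LipschitzOnWith K g s) (ht : t ∈ s)
    [(𝓝[s \ {t}] t).NeBot] : |v| ≤ K := by
  refine le_of_tendsto (hasDerivWithinAt_iff_tendsto_slope.1 hv).abs ?_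
  filter_upwards [self_mem_nhdsWithin] with u ⟨hu, hut⟩
  rw [slope_def_field, abs_div, div_le_iff₀ (abs_pos.2 (sub_ne_zero.2 hut))]
  simpa [Real.dist_eq] using hg.dist_le_mul u hu t ht

end ExpandingSet

section ConeCurves

variable {n : ℕ} {φ : X → E n} {K : ℝ≥0} {w : E n} {θ : ℝ}

lemma isConeCurve_restrict {γ : Fragment X} (hφγ : LipschitzOnWith K (φ ∘ γ.fn) γ.dom)
    (hw : ‖w‖ = 1) (hθ : 0 ≤ θ) {c : ℝ} (hc : 0 < c) (hθc : K * θ ≤ c) {P : Set ℝ}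
    (hP : IsCompact P) (hne : P.Nonempty) (hPγ : P ⊆ γ.dom)
    (hexp : ∀ s ∈ P, ∀ t ∈ P, c * |s - t| ≤ |⟪φ (γ.fn s), w⟫ - ⟪φ (γ.fn t), w⟫|) :
    IsConeCurve φ (cone w θ) (γ.restrict P hP hne hPγ) := by
  refine ⟨c, hc, ?_⟩
  rintro _ ⟨s, hs, rfl⟩ _ ⟨t, ht, rfl⟩
  refine mem_cone_diff_ball hw ?_ (by rw [inner_sub_left]; exact hexp s hs t ht)
  have hφst : ‖φ (γ.fn s) - φ (γ.fn t)‖ ≤ K * |s - t| := by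
    simpa [dist_eq_norm, Real.dist_eq] using hφγ.dist_le_mul s (hPγ hs) t (hPγ ht)
  calc θ * ‖φ (γ.fn s) - φ (γ.fn t)‖ ≤ θ * (K * |s - t|) := by gcongr
    _ = K * θ * |s - t| := by ring
    _ ≤ c * |s - t| := by gcongr

variable [MeasurableSpace X] [BorelSpace X]

/-- Cutting the domain into pieces of length `r / 2`, each compact piece of the expanding set
carries a cone curve, on which `S` is `𝓗¹`-null. -/
lemma volume_expandingSet_preimage_eq_zero {γ : Fragment X}
    (hφγ : LipschitzOnWith K (φ ∘ γ.fn) γ.dom) (hw : ‖w‖ = 1) (hθ : 0 ≤ θ) {S : Set X}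
    (hS : ConeNull φ (cone w θ) S) {c r : ℝ} (hc : 0 < c) (hθc : K * θ ≤ c) (hr : 0 < r) :
    volume {t ∈ expandingSet (fun t => ⟪φ (γ.fn t), w⟫) γ.dom c r | γ.fn t ∈ S} = 0 := by
  set g : ℝ → ℝ := fun t => ⟪φ (γ.fn t), w⟫
  have hclosed : IsClosed (expandingSet g γ.dom c r) :=
    isClosed_expandingSet γ.isClosed_dom (hφγ.continuousOn.inner continuousOn_const)
  set P : ℤ → Set ℝ := fun j => expandingSet g γ.dom c r ∩ Icc (j • (r / 2)) ((j + 1) • (r / 2))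
  have hcover : {t ∈ expandingSet g γ.dom c r | γ.fn t ∈ S} ⊆ ⋃ j, {t ∈ P j | γ.fn t ∈ S} := by
    intro t ht
    obtain ⟨j, hj⟩ := mem_iUnion.1 ((iUnion_Icc_add_zsmul (half_pos hr) 0).symm ▸ mem_univ t)
    exact mem_iUnion.2 ⟨j, ⟨ht.1, by simpa using hj⟩, ht.2⟩
  refine measure_mono_null hcover (measure_iUnion_null fun j => ?_)
  rcases (P j).eq_empty_or_nonempty with hempty | hne
  · simp [hempty]
  have hPγ : P j ⊆ γ.dom := fun t ht => ht.1.1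
  have hexp : ∀ s ∈ P j, ∀ t ∈ P j, c * |s - t| ≤ |g s - g t| := by
    rintro s ⟨⟨hs, -⟩, hs₁, hs₂⟩ t ⟨⟨-, htexp⟩, ht₁, ht₂⟩
    refine htexp s hs ?_
    rw [add_smul, one_smul] at hs₂ ht₂
    rw [abs_sub_lt_iff]
    constructor <;> linarith
  have hcurve := isConeCurve_restrict hφγ hw hθ hc hθc (isCompact_Icc.inter_left hclosed) hne
    hPγ hexp
  refine γ.volume_eq_zero_of_hausdorffMeasure_image (fun t ht => hPγ ht.1)
    (measure_mono_null ?_ (hS _ hcurve))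
  rintro _ ⟨t, ⟨htP, htS⟩, rfl⟩
  exact ⟨by rw [Fragment.im_restrict]; exact mem_image_of_mem _ htP, htS⟩

end ConeCurves

lemma isStarUpperGradient_inner_of_coneNull [MeasurableSpace X] [BorelSpace X] {n : ℕ}
    {φ : X → E n} {K : ℝ≥0} (hφ : LipschitzWith K φ) {w : E n} (hw : ‖w‖ = 1) {θ : ℝ}
    (hθ : 0 ≤ θ) {S : Set X} [DecidablePred (· ∈ S)] (hS : ConeNull φ (cone w θ) S) :
    IsStarUpperGradient (fun y => ⟪φ y, w⟫) (fun x => if x ∈ S then K * θ else K) := by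
  intro γ hγ
  set g : ℝ → ℝ := fun t => ⟪φ (γ.fn t), w⟫
  have hφγ : LipschitzOnWith K (φ ∘ γ.fn) γ.dom := by
    simpa using hφ.comp_lipschitzOnWith hγ
  have hg : LipschitzOnWith K g γ.dom := by
    have hw' : ‖w‖₊ = 1 := NNReal.eq hw
    have hcomp := (hφ.inner_const w).comp_lipschitzOnWith hγ
    rwa [hw', mul_one, mul_one] at hcomp
  set c : ℕ → ℝ := fun q => K * θ + 1 / (q + 1)
  have hc : ∀ q, 0 < c q := fun q => by positivity
  set N := {t ∈ γ.dom | 𝓝[γ.dom \ {t}] t = ⊥} ∪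
    ⋃ (q : ℕ) (m : ℕ), {t ∈ expandingSet g γ.dom (c q) (1 / (m + 1)) | γ.fn t ∈ S}
  have hN : volume N = 0 :=
    measure_union_null ((countable_setOf_isolated_within γ.dom).measure_zero _)
      (measure_iUnion_null fun q => measure_iUnion_null fun m =>
        volume_expandingSet_preimage_eq_zero hφγ hw hθ hS (hc q)
          (le_add_of_nonneg_right (by positivity)) Nat.one_div_pos_of_nat)
  filter_upwards [ae_restrict_mem γ.isClosed_dom.measurableSet,
    ae_restrict_of_ae (measure_eq_zero_iff_ae_notMem.1 hN)] with t ht htN v hv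
  have : (𝓝[γ.dom \ {t}] t).NeBot := ⟨fun hbot => htN (Or.inl ⟨ht, hbot⟩)⟩
  split_ifs with htS
  · by_contra! hlt
    obtain ⟨q, hq⟩ : ∃ q : ℕ, c q < |v| :=
      (exists_nat_one_div_lt (sub_pos.2 hlt)).imp fun q hq => by simp only [c]; linarith
    obtain ⟨r, hr, htr⟩ := hv.exists_mem_expandingSet ht hq
    obtain ⟨m, hm⟩ := exists_nat_one_div_lt hr
    exact htN (Or.inr (mem_iUnion₂.2 ⟨q, m, expandingSet_anti hm.le htr, htS⟩))
  · exact hv.abs_le_of_lipschitzOnWith hg ht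

section LipAt

variable {f g : X → ℝ} {x : X} {r : ℝ}

def slopeSup (f : X → ℝ) (x : X) (r : ℝ) : ℝ :=
  sSup ((fun y => |f y - f x| / r) '' closedBall x r)

lemma lipAt_eq_limsup_slopeSup : lipAt f x = limsup (slopeSup f x) (𝓝[>] 0) := rfl

lemma slope_le_of_lipschitzWith {K : ℝ≥0} (hf : LipschitzWith K f) (hr : 0 < r) {y : X}
    (hy : y ∈ closedBall x r) : |f y - f x| / r ≤ K := by
  rw [div_le_iff₀ hr, ← Real.dist_eq]
  exact (hf.dist_le_mul y x).trans (by gcongr; exact hy)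

lemma slopeSup_le {K : ℝ≥0} (hf : LipschitzWith K f) (hr : 0 < r) : slopeSup f x r ≤ K :=
  csSup_le ((nonempty_closedBall.2 hr.le).image _)
    (forall_mem_image.2 fun _ hy => slope_le_of_lipschitzWith hf hr hy)

lemma le_slopeSup {K : ℝ≥0} (hf : LipschitzWith K f) (hr : 0 < r) {y : X}
    (hy : y ∈ closedBall x r) : |f y - f x| / r ≤ slopeSup f x r :=
  le_csSup ⟨K, forall_mem_image.2 fun _ hz => slope_le_of_lipschitzWith hf hr hz⟩
    (mem_image_of_mem _ hy)

lemma slopeSup_nonneg {K : ℝ≥0} (hf : LipschitzWith K f) (hr : 0 < r) : 0 ≤ slopeSup f x r := by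
  simpa using le_slopeSup hf hr (mem_closedBall_self hr.le)

lemma slopeSup_le_add {Kg K : ℝ≥0} (hg : LipschitzWith Kg g) (hfg : LipschitzWith K (f - g))
    (hr : 0 < r) : slopeSup f x r ≤ slopeSup g x r + K := by
  refine csSup_le ((nonempty_closedBall.2 hr.le).image _) (forall_mem_image.2 fun y hy => ?_)
  have htri : |f y - f x| ≤ |g y - g x| + |(f - g) y - (f - g) x| := by
    calc |f y - f x| = |(g y - g x) + ((f - g) y - (f - g) x)| := by
          simp only [Pi.sub_apply]; ring_nf
      _ ≤ _ := abs_add_le _ _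
  calc |f y - f x| / r ≤ |g y - g x| / r + |(f - g) y - (f - g) x| / r := by
        rw [← add_div]; gcongr
    _ ≤ slopeSup g x r + K :=
        add_le_add (le_slopeSup hg hr hy) (slope_le_of_lipschitzWith hfg hr hy)

lemma lipAt_le_add {Kg K : ℝ≥0} (hg : LipschitzWith Kg g) (hfg : LipschitzWith K (f - g)) :
    lipAt f x ≤ lipAt g x + K := by
  have hf : LipschitzWith (Kg + K) f := by simpa using hg.add hfg
  have hpos : ∀ᶠ r in 𝓝[>] (0 : ℝ), 0 < r := self_mem_nhdsWithin
  rw [lipAt_eq_limsup_slopeSup, lipAt_eq_limsup_slopeSup,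
    ← limsup_add_const _ (slopeSup g x) (K : ℝ)
    ⟨Kg, eventually_map.2 (hpos.mono fun r hr => slopeSup_le hg hr)⟩
    (isCoboundedUnder_le_of_eventually_le _ (hpos.mono fun r hr => slopeSup_nonneg hg hr))]
  exact limsup_le_limsup (hpos.mono fun r hr => slopeSup_le_add hg hfg hr)
    (isCoboundedUnder_le_of_eventually_le _ (hpos.mono fun r hr => slopeSup_nonneg hf hr))
    ⟨Kg + K, eventually_map.2 (hpos.mono fun r hr => add_le_add_left (slopeSup_le hg hr) _)⟩

end LipAt

lemma lipschitzWith_lipAt_inner {F : Type*} [NormedAddCommGroup F] [InnerProductSpace ℝ F]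
    {φ : X → F} {K : ℝ≥0} (hφ : LipschitzWith K φ) (x : X) :
    LipschitzWith K fun w => lipAt (fun y => ⟪φ y, w⟫) x := by
  refine LipschitzWith.of_le_add_mul K fun w w' => ?_
  have hdiff : ((fun y => ⟪φ y, w⟫) - fun y => ⟪φ y, w'⟫) = fun y => ⟪φ y, w - w'⟫ := by
    ext y
    simp [inner_sub_right]
  have := lipAt_le_add (x := x) (hφ.inner_const w') (hdiff ▸ hφ.inner_const (w - w'))
  simpa [dist_eq_norm] using this

lemma exists_pos_le_lipAt_of_mem_indSet {n : ℕ} {φ : X → E n} {K : ℝ≥0}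
    (hφ : LipschitzWith K φ) {x : X} (hx : x ∈ indSet φ) :
    ∃ ε > 0, ∀ w : E n, ‖w‖ = 1 → ε ≤ lipAt (fun y => ⟪φ y, w⟫) x := by
  rcases (sphere (0 : E n) 1).eq_empty_or_nonempty with hempty | hne
  · refine ⟨1, one_pos, fun w hw => ?_⟩
    exact absurd (hempty ▸ mem_sphere_zero_iff_norm.2 hw) (notMem_empty w)
  obtain ⟨w₀, hw₀, hmin⟩ := (isCompact_sphere (0 : E n) 1).exists_isMinOn hne
    (lipschitzWith_lipAt_inner hφ x).continuous.continuousOn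
  exact ⟨_, hx w₀ (mem_sphere_zero_iff_norm.1 hw₀),
    fun w hw => hmin (mem_sphere_zero_iff_norm.2 hw)⟩

lemma measure_setOf_lt_lipAt_eq_zero [MeasurableSpace X] [BorelSpace X] (μ : Measure X) (C : ℝ)
    (h : ∀ f : X → ℝ, (∃ K, LipschitzWith K f) → ∀ ρ : X → ℝ, Measurable ρ →
      IsStarUpperGradient f ρ → ∀ᵐ x ∂μ, lipAt f x ≤ C * ρ x)
    {n : ℕ} {φ : X → E n} {K : ℝ≥0} (hφ : LipschitzWith K φ) {S : Set X} (hS : MemScal φ S)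
    {a : ℝ} (ha : 0 < a) :
    μ {x ∈ S | ∀ w : E n, ‖w‖ = 1 → a < lipAt (fun y => ⟪φ y, w⟫) x} = 0 := by
  classical
  obtain ⟨θ, ⟨hθ₀, hθ₁⟩, hθa⟩ : ∃ θ ∈ Ioo (0 : ℝ) 1, C * (K * θ) < a := by
    have hlim : Tendsto (fun θ : ℝ => C * (K * θ)) (𝓝[>] 0) (𝓝 0) :=
      ((by fun_prop : Continuous fun θ : ℝ => C * (K * θ)).tendsto' 0 0 (by simp)).mono_left
        nhdsWithin_le_nhds
    have hθ : ∀ᶠ θ in 𝓝[>] (0 : ℝ), θ ∈ Ioo 0 1 := Ioo_mem_nhdsGT one_pos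
    exact (hθ.and (hlim.eventually (gt_mem_nhds ha))).exists
  obtain ⟨m, S', w, rfl, hS'⟩ := hS.2 θ ⟨hθ₀, hθ₁⟩
  have hae : ∀ᵐ x ∂μ, ∀ i, lipAt (fun y => ⟪φ y, w i⟫) x ≤
      C * (if x ∈ S' i then (K : ℝ) * θ else K) :=
    ae_all_iff.2 fun i => h _ ⟨_, hφ.inner_const (w i)⟩ _
      (measurable_const.ite (hS' i).1 measurable_const)
      (isStarUpperGradient_inner_of_coneNull hφ (hS' i).2.1 hθ₀.le (hS' i).2.2)
  refine measure_mono_null ?_ (ae_iff.1 hae)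
  rintro x ⟨hxS, hlt⟩ hx
  obtain ⟨i, hi⟩ := mem_iUnion.1 hxS
  have hxi := hx i
  rw [if_pos hi] at hxi
  linarith [hlt (w i) (hS' i).2.1]

variable {X : Type*} [MetricSpace X] [CompleteSpace X] [TopologicalSpace.SeparableSpace X]
  [MeasurableSpace X] [BorelSpace X]

theorem singular_null_of_star_upper_gradients_general (μ : Measure X)
    (C : ℝ)
    (h : ∀ f : X → ℝ, (∃ K, LipschitzWith K f) → ∀ ρ : X → ℝ, Measurable ρ →
      IsStarUpperGradient f ρ → ∀ᵐ x ∂μ, lipAt f x ≤ C * ρ x) :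
    ∀ (n : ℕ) (φ : X → E n), (∃ K, LipschitzWith K φ) →
      ∀ S : Set X, MemScal φ S → μ (S ∩ indSet φ) = 0 := by
  rintro n φ ⟨K, hφ⟩ S hS
  refine measure_mono_null (fun x ⟨hxS, hx⟩ => ?_) (measure_iUnion_null fun k : ℕ =>
    measure_setOf_lt_lipAt_eq_zero μ C h hφ hS (Nat.one_div_pos_of_nat (n := k)))
  obtain ⟨ε, hε, hεx⟩ := exists_pos_le_lipAt_of_mem_indSet hφ hx
  obtain ⟨k, hk⟩ := exists_nat_one_div_lt hε
  exact mem_iUnion.2 ⟨k, hxS, fun w hw => hk.trans_le (hεx w hw)⟩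

/-- If there is `C ≥ 1` such that `Lip(f,·) ≤ C ρ` `μ`-a.e. for every
Lipschitz `f : X → ℝ` and every Borel `*`-upper gradient `ρ` of `f`, then
`μ(S ∩ ind φ) = 0` for every Lipschitz `φ : X → ℝⁿ` and every `S ∈ 𝒮(φ)`. -/
theorem singular_null_of_star_upper_gradients (μ : Measure X) [SigmaFinite μ]
    (C : ℝ) (hC : 1 ≤ C)
    (h : ∀ f : X → ℝ, (∃ K, LipschitzWith K f) → ∀ ρ : X → ℝ, Measurable ρ →
      IsStarUpperGradient f ρ → ∀ᵐ x ∂μ, lipAt f x ≤ C * ρ x) :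
    ∀ (n : ℕ) (φ : X → E n), (∃ K, LipschitzWith K φ) →
      ∀ S : Set X, MemScal φ S → μ (S ∩ indSet φ) = 0 :=
  singular_null_of_star_upper_gradients_general μ C h

end BKO
end
end
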